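/- Let E be a real inner product space, X ⊆ E, f₀ : E → ℝ, and let f₁, f₂ : E → ℝ be convex with f₂ differentiable on E. Suppose x₀ ∈ X satisfies f₁(x₀) − f₂(x₀) ≤ 0, and let f̃₂(x) = f₂(x₀) + ⟨∇f₂(x₀), x − x₀⟩. Let F = {x ∈ X : f₁(x) − f̃₂(x) ≤ 0} and suppose x* minimizes f₀ over F. Then: (1) x₀ ∈ F; (2) f₁(x*) − f₂(x*) ≤ 0, i.e., x* is feasible for the DC problem min{f₀(x) : x ∈ X, f₁(x) − f₂(x) ≤ 0}; (3) f₀(x*) ≤ f₀(x₀); and (4) f₀(x*) is an upper bound for the infimum of f₀ over {x ∈ X : f₁(x) − f₂(x) ≤ 0}. -/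

import Mathlib

/-!
The first-order Taylor approximation of the convex function `f₂` at `x₀` is a global minorant
of `f₂` that is exact at `x₀`. Hence replacing `f₂` by it shrinks the feasible set of the DC
constraint `f₁ - f₂ ≤ 0` while keeping `x₀` feasible: a minimizer `x*` of `f₀` over the
shrunken set is feasible for the original problem and cannot be worse than `x₀`.
-/

section FirstOrderCondition

open Set InnerProductSpace

variable {E : Type*} [NormedAddCommGroup E]

theorem ConvexOn.add_fderiv_le [NormedSpace ℝ E] {s : Set E} {f : E → ℝ} {f' : E →L[ℝ] ℝ}
    {x y : E} (hf : ConvexOn ℝ s f) (hx : x ∈ s) (hy : y ∈ s) (hf' : HasFDerivAt f f' x) :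
    f x + f' (y - x) ≤ f y := by
  set g : ℝ → ℝ := f ∘ AffineMap.lineMap x y
  have hg : ConvexOn ℝ (Icc 0 1) g :=
    (hf.comp_affineMap _).subset (fun _ ht ↦ hf.1.lineMap_mem hx hy ht) (convex_Icc 0 1)
  have hg' : HasDerivAt g (f' (y - x)) 0 := by
    have hf'0 : HasFDerivAt f f' (AffineMap.lineMap x y (0 : ℝ)) := by simpa using hf'
    exact hf'0.comp_hasDerivAt 0 AffineMap.hasDerivAt_lineMap
  have hslope := hg.le_slope_of_hasDerivAt (by simp) (by simp) zero_lt_one hg'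
  have hg_secant : slope g 0 1 = f y - f x := by simp [g, slope]
  linarith

theorem ConvexOn.add_inner_gradient_le [InnerProductSpace ℝ E] [CompleteSpace E] {s : Set E}
    {f : E → ℝ} {x y : E} (hf : ConvexOn ℝ s f) (hx : x ∈ s) (hy : y ∈ s)
    (hfx : DifferentiableAt ℝ f x) : f x + inner ℝ (gradient f x) (y - x) ≤ f y := by
  have h := hf.add_fderiv_le hx hy hfx.hasFDerivAt
  rwa [← toDual_gradient, toDual_apply_apply] at h

end FirstOrderCondition

theorem ccp_single_iteration_general
    {E : Type*} [NormedAddCommGroup E] [InnerProductSpace ℝ E] [CompleteSpace E]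
    (X : Set E) (f₀ f₁ f₂ : E → ℝ)
    (h₂ : ConvexOn ℝ Set.univ f₂)
    (hd : Differentiable ℝ f₂)
    (x₀ : E) (hx₀X : x₀ ∈ X) (hx₀feas : f₁ x₀ - f₂ x₀ ≤ 0)
    (xs : E)
    (hxsF : xs ∈ {x ∈ X | f₁ x - (f₂ x₀ + (inner ℝ (gradient f₂ x₀) (x - x₀) : ℝ)) ≤ 0})
    (hxsmin : ∀ y ∈ {x ∈ X | f₁ x - (f₂ x₀ + (inner ℝ (gradient f₂ x₀) (x - x₀) : ℝ)) ≤ 0},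
      f₀ xs ≤ f₀ y) :
    x₀ ∈ {x ∈ X | f₁ x - (f₂ x₀ + (inner ℝ (gradient f₂ x₀) (x - x₀) : ℝ)) ≤ 0} ∧
    f₁ xs - f₂ xs ≤ 0 ∧
    f₀ xs ≤ f₀ x₀ ∧
    ∀ m : ℝ, IsGLB (f₀ '' {x ∈ X | f₁ x - f₂ x ≤ 0}) m → m ≤ f₀ xs := by
  have hx₀F : x₀ ∈ {x ∈ X | f₁ x - (f₂ x₀ + (inner ℝ (gradient f₂ x₀) (x - x₀) : ℝ)) ≤ 0} :=
    ⟨hx₀X, by simpa using hx₀feas⟩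
  have htangent := h₂.add_inner_gradient_le (Set.mem_univ x₀) (Set.mem_univ xs) (hd x₀)
  have hxs_feas : f₁ xs - f₂ xs ≤ 0 := by linarith [hxsF.2]
  exact ⟨hx₀F, hxs_feas, hxsmin x₀ hx₀F,
    fun _ hm ↦ hm.1 (Set.mem_image_of_mem f₀ ⟨hxsF.1, hxs_feas⟩)⟩

/-- One iteration of the convex–concave procedure (Algorithm 1 of the paper):
if `x₀ ∈ X` is feasible for the DC constraint `f₁ − f₂ ≤ 0` and `x*` minimizes `f₀`
over the convexified feasible set `F = {x ∈ X : f₁(x) − f̃₂(x) ≤ 0}` with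
`f̃₂(x) = f₂(x₀) + ⟨∇f₂(x₀), x − x₀⟩`, then (1) `x₀ ∈ F`; (2) `x*` is feasible for the
DC problem; (3) `f₀(x*) ≤ f₀(x₀)`; (4) `f₀(x*)` upper-bounds the infimum of `f₀` over
the DC feasible set. -/
theorem ccp_single_iteration
    {E : Type*} [NormedAddCommGroup E] [InnerProductSpace ℝ E] [CompleteSpace E]
    (X : Set E) (f₀ f₁ f₂ : E → ℝ)
    (h₁ : ConvexOn ℝ Set.univ f₁) (h₂ : ConvexOn ℝ Set.univ f₂)
    (hd : Differentiable ℝ f₂)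
    (x₀ : E) (hx₀X : x₀ ∈ X) (hx₀feas : f₁ x₀ - f₂ x₀ ≤ 0)
    (xs : E)
    (hxsF : xs ∈ {x ∈ X | f₁ x - (f₂ x₀ + (inner ℝ (gradient f₂ x₀) (x - x₀) : ℝ)) ≤ 0})
    (hxsmin : ∀ y ∈ {x ∈ X | f₁ x - (f₂ x₀ + (inner ℝ (gradient f₂ x₀) (x - x₀) : ℝ)) ≤ 0},
      f₀ xs ≤ f₀ y) :
    x₀ ∈ {x ∈ X | f₁ x - (f₂ x₀ + (inner ℝ (gradient f₂ x₀) (x - x₀) : ℝ)) ≤ 0} ∧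
    f₁ xs - f₂ xs ≤ 0 ∧
    f₀ xs ≤ f₀ x₀ ∧
    ∀ m : ℝ, IsGLB (f₀ '' {x ∈ X | f₁ x - f₂ x ≤ 0}) m → m ≤ f₀ xs :=
  ccp_single_iteration_general X f₀ f₁ f₂ h₂ hd x₀ hx₀X hx₀feas xs hxsF hxsmin
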